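/- arXiv:math/0202241 — 3 statements merged into one kernel-verified Lean document; each statement's English description precedes it below -/
import Mathlib

section
/- Let p and q be real polynomials with positive leading coefficients and deg p ≤ deg q. Then the proper rational function p/q is strictly positive real if and only if the polynomial λ p(s)² + (1−λ) q(s)² is Hurwitz stable for every λ ∈ [0,1]. -/
open Polynomial

/-- A real polynomial is Hurwitz stable if all its complex roots have negative real part. -/
def Hurwitz (p : ℝ[X]) : Prop :=
  ∀ z : ℂ, Polynomial.aeval z p = 0 → z.re < 0

/-- The (proper) real rational function `p/q` is strictly positive real: `q` is Hurwitz
stable and `Re (p(jω)/q(jω)) > 0` for all real `ω`. -/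
def SPR (p q : ℝ[X]) : Prop :=
  Hurwitz q ∧
    ∀ ω : ℝ, 0 < ((Polynomial.aeval ((ω : ℂ) * Complex.I) p) /
      (Polynomial.aeval ((ω : ℂ) * Complex.I) q)).re

/-!
For `Re z ≥ 0` and `q(z) ≠ 0` put `w = p(z)/q(z)`. Then `z` is a root of `t p² + (1 - t) q²` for
some `t ∈ [0,1]` iff `t w² + 1 - t = 0` for some such `t`, iff `w` is purely imaginary.
If `p/q` is SPR, then `Re (p/q) > 0` on the whole closed right half-plane: Phragmén–Lindelöf
applied to `exp (-p/q)`, which is bounded there because `deg p ≤ deg q`, gives `Re (p/q) ≥ 0`,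
and the maximum modulus principle makes the inequality strict. So no such root exists.
Conversely, the cases `t = 0, 1` make `q` and `p` Hurwitz, so `Re (p/q)(jω)` never vanishes and
is positive at `ω = 0`, where a Hurwitz polynomial with positive leading coefficient is positive.
-/

open Complex Filter Set Bornology Topology

lemma DiffContOnCl.cexp_neg {f : ℂ → ℂ} {s : Set ℂ} (hd : DiffContOnCl ℂ f s) :
    DiffContOnCl ℂ (fun z => exp (-f z)) s :=
  differentiable_exp.comp_diffContOnCl hd.neg

theorem re_nonneg_of_re_nonneg_on_imaginaryAxis {f : ℂ → ℂ}
    (hd : DiffContOnCl ℂ f {z | 0 < z.re})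
    (hbdd : IsBoundedUnder (· ≤ ·) (cobounded ℂ) fun z => ‖f z‖)
    (him : ∀ ω : ℝ, 0 ≤ (f (ω * I)).re) {z : ℂ} (hz : 0 ≤ z.re) : 0 ≤ (f z).re := by
  obtain ⟨M, hM⟩ := hbdd
  have hexp : ∀ᶠ w in cobounded ℂ, ‖exp (-f w)‖ ≤ Real.exp M := by
    filter_upwards [hM] with w hw
    rw [norm_exp, Real.exp_le_exp, neg_re]
    exact (neg_le_abs _).trans ((abs_re_le_norm _).trans hw)
  have hreal : Tendsto (fun x : ℝ => (x : ℂ)) atTop (cobounded ℂ) :=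
    tendsto_norm_atTop_iff_cobounded.1 <| by simpa using tendsto_abs_atTop_atTop
  have key : ‖exp (-f z)‖ ≤ 1 := by
    refine PhragmenLindelof.right_half_plane_of_bounded_on_real (f := fun w => exp (-f w))
      hd.cexp_neg ⟨0, two_pos, M, ?_⟩
      (isBoundedUnder_of_eventually_le (hreal.eventually hexp)) (fun ω => ?_) hz
    · refine Asymptotics.IsBigO.of_bound 1 ((hexp.filter_mono inf_le_left).mono fun w hw => ?_)
      simpa using hw
    · simpa [norm_exp] using him ω
  simpa [norm_exp] using key

theorem re_pos_of_re_pos_on_imaginaryAxis {f : ℂ → ℂ}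
    (hd : DiffContOnCl ℂ f {z | 0 < z.re})
    (hbdd : IsBoundedUnder (· ≤ ·) (cobounded ℂ) fun z => ‖f z‖)
    (him : ∀ ω : ℝ, 0 < (f (ω * I)).re) {z : ℂ} (hz : 0 ≤ z.re) : 0 < (f z).re := by
  have hnonneg {w : ℂ} (hw : 0 ≤ w.re) : 0 ≤ (f w).re :=
    re_nonneg_of_re_nonneg_on_imaginaryAxis hd hbdd (fun ω => (him ω).le) hw
  rcases hz.eq_or_lt with hz | hz
  · convert him z.im
    apply Complex.ext <;> simp [← hz]
  by_contra! hle
  -- `‖exp (-f)‖ ≤ 1` attains its maximum at the interior point `z`, so it is constant up to the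
  -- imaginary axis, where it is `< 1`.
  have hmax : IsMaxOn (fun w => ‖exp (-f w)‖) {w | 0 < w.re} z := fun w hw => by
    simp only [mem_ofPred_eq, norm_exp, neg_re, Real.exp_le_exp]
    linarith [hnonneg (le_of_lt hw)]
  have hconst := Complex.norm_eqOn_closure_of_isPreconnected_of_isMaxOn
    (convex_halfSpace_re_gt 0).isPreconnected (isOpen_lt continuous_const continuous_re)
    hd.cexp_neg hz hmax (x := 0) (by simp [closure_setOfPred_lt_re])
  have h0 := him 0
  simp only [Function.comp_apply, norm_exp, neg_re, Function.const_apply, Real.exp_eq_exp] at hconst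
  simp only [ofReal_zero, zero_mul] at h0
  linarith

lemma Hurwitz.aeval_ne_zero {p : ℝ[X]} (hp : Hurwitz p) {z : ℂ} (hz : 0 ≤ z.re) :
    aeval z p ≠ 0 :=
  fun h => (hp z h).not_ge hz

lemma Hurwitz.ne_zero {p : ℝ[X]} (hp : Hurwitz p) : p ≠ 0 := by
  rintro rfl
  exact (hp 1 (map_zero _)).not_ge zero_le_one

lemma Hurwitz.of_dvd {p q : ℝ[X]} (hp : Hurwitz p) (hqp : q ∣ p) : Hurwitz q := by
  obtain ⟨r, rfl⟩ := hqp
  exact fun z hz => hp z (by simp [hz])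

lemma Hurwitz.eval_pos {p : ℝ[X]} (hp : Hurwitz p) (hlc : 0 < p.leadingCoeff) {x : ℝ}
    (hx : 0 ≤ x) : 0 < p.eval x := by
  refine zero_lt_eval_of_roots_lt_of_leadingCoeff_nonneg (fun y hy => ?_) hlc.le
  have := hp y (by simpa [hy.eq_zero] using aeval_ofReal (K := ℂ) p y)
  rw [ofReal_re] at this
  linarith

lemma isBoundedUnder_norm_eval_div_eval {𝕜 : Type*} [NormedField 𝕜] [ProperSpace 𝕜]
    {P Q : 𝕜[X]} (hQ : Q ≠ 0) (h : P.degree ≤ Q.degree) :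
    IsBoundedUnder (· ≤ ·) (cobounded 𝕜) fun z => ‖P.eval z / Q.eval z‖ := by
  refine (Asymptotics.isBigO_iff_div_isBoundedUnder ?_).1 (isBigO_cobounded_of_degree_le h)
  rw [Metric.cobounded_eq_cocompact]
  exact (eventually_cofinite_not_isRoot hQ).filter_mono cocompact_le_cofinite |>.mono
    fun z hz hz' => absurd hz' hz

lemma diffContOnCl_aeval_div_aeval (p : ℝ[X]) {q : ℝ[X]} (hq : Hurwitz q) :
    DiffContOnCl ℂ (fun z : ℂ => aeval z p / aeval z q) {z : ℂ | 0 < z.re} := by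
  refine ⟨?_, ?_⟩
  · exact p.differentiable_aeval.differentiableOn.div q.differentiable_aeval.differentiableOn
      fun z (hz : 0 < z.re) => hq.aeval_ne_zero hz.le
  · rw [closure_setOfPred_lt_re]
    exact p.continuous_aeval.continuousOn.div q.continuous_aeval.continuousOn
      fun z hz => hq.aeval_ne_zero hz

theorem SPR.re_pos_of_re_nonneg {p q : ℝ[X]} (h : SPR p q) (hdeg : p.natDegree ≤ q.natDegree)
    {z : ℂ} (hz : 0 ≤ z.re) : 0 < (aeval z p / aeval z q).re := by
  have hq0 := h.1.ne_zero
  have hdeg' : (p.map (algebraMap ℝ ℂ)).degree ≤ (q.map (algebraMap ℝ ℂ)).degree := by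
    rw [degree_map, degree_map, degree_eq_natDegree hq0]
    exact degree_le_of_natDegree_le hdeg
  have hbdd := isBoundedUnder_norm_eval_div_eval
    ((Polynomial.map_ne_zero_iff (algebraMap ℝ ℂ).injective).2 hq0) hdeg'
  simp only [eval_map_algebraMap] at hbdd
  exact re_pos_of_re_pos_on_imaginaryAxis (diffContOnCl_aeval_div_aeval p h.1) hbdd h.2 hz

lemma exists_mem_Icc_mul_sq_add_one_sub_eq_zero_iff (w : ℂ) :
    (∃ t ∈ Icc (0 : ℝ) 1, (t : ℂ) * w ^ 2 + (1 - t) = 0) ↔ w.re = 0 := by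
  constructor
  · rintro ⟨t, ⟨ht0, ht1⟩, h⟩
    have hre : t * (w.re ^ 2 - w.im ^ 2) + (1 - t) = 0 := by
      simpa [sq] using congrArg re h
    have him : t * (w.re * w.im) = 0 := by
      have := congrArg im h
      simp only [add_im, mul_im, ofReal_re, ofReal_im, sq, sub_im, one_im, zero_im] at this
      linarith
    have ht : t ≠ 0 := by rintro rfl; simp at hre
    -- `t w² = t - 1` is a nonpositive real, so `w` is purely imaginary
    have h4 : t * w.re ^ 4 + (1 - t) * w.re ^ 2 = 0 := by
      linear_combination w.re ^ 2 * hre + w.re * w.im * him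
    have : t * w.re ^ 4 = 0 := by nlinarith [sq_nonneg w.re, pow_two_nonneg (w.re ^ 2)]
    simpa [ht] using this
  · intro h
    set y := w.im
    have hy : (1 + (y : ℂ) ^ 2) ≠ 0 := by exact_mod_cast (by positivity : (1 + y ^ 2) ≠ 0)
    refine ⟨1 / (1 + y ^ 2), ⟨by positivity, ?_⟩, ?_⟩
    · rw [div_le_one (by positivity)]
      nlinarith [sq_nonneg y]
    · rw [← re_add_im w, h]
      push_cast
      rw [zero_add, mul_pow, I_sq]
      field_simp
      ring

lemma exists_mem_Icc_mul_sq_add_one_sub_mul_sq_eq_zero_iff {a b : ℂ} (hb : b ≠ 0) :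
    (∃ t ∈ Icc (0 : ℝ) 1, (t : ℂ) * a ^ 2 + (1 - t) * b ^ 2 = 0) ↔ (a / b).re = 0 := by
  rw [← exists_mem_Icc_mul_sq_add_one_sub_eq_zero_iff]
  refine exists_congr fun t => and_congr_right fun _ => ?_
  have : (t : ℂ) * a ^ 2 + (1 - t) * b ^ 2 = b ^ 2 * (t * (a / b) ^ 2 + (1 - t)) := by
    field_simp
  simp [this, hb]

lemma aeval_C_mul_sq_add_C_mul_sq (p q : ℝ[X]) (t : ℝ) (z : ℂ) :
    aeval z (C t * p ^ 2 + C (1 - t) * q ^ 2) = t * aeval z p ^ 2 + (1 - t) * aeval z q ^ 2 := by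
  simp

lemma SPR.of_re_ne_zero {p q : ℝ[X]} (hp : Hurwitz p) (hq : Hurwitz q)
    (hpl : 0 < p.leadingCoeff) (hql : 0 < q.leadingCoeff)
    (hne : ∀ ω : ℝ, (aeval (ω * I) p / aeval (ω * I) q).re ≠ 0) : SPR p q := by
  refine ⟨hq, fun ω => ?_⟩
  set F : ℝ → ℝ := fun ω => (aeval (ω * I) p / aeval (ω * I) q).re
  have hF : Continuous F := continuous_re.comp <|
    (p.continuous_aeval.comp (by fun_prop)).div (q.continuous_aeval.comp (by fun_prop))
      fun ω => hq.aeval_ne_zero (by simp)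
  have hF0 : 0 < F 0 := by
    have h0 (r : ℝ[X]) : aeval (((0 : ℝ) : ℂ) * I) r = r.eval 0 := by
      simpa using aeval_ofReal (K := ℂ) r 0
    simp only [F, h0, ← ofReal_div, ofReal_re]
    exact div_pos (hp.eval_pos hpl le_rfl) (hq.eval_pos hql le_rfl)
  by_contra! hω
  obtain ⟨c, hc⟩ := intermediate_value_univ ω 0 hF ⟨hω, hF0.le⟩
  exact hne c hc

/-- For real polynomials `p`, `q` with positive leading coefficients and `deg p ≤ deg q`,
`p/q` is strictly positive real iff `t p² + (1-t) q²` is Hurwitz stable for all `t ∈ [0,1]`. -/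
theorem spr_iff_convex_combination_of_squares_hurwitz (p q : ℝ[X])
    (hp : 0 < p.leadingCoeff) (hq : 0 < q.leadingCoeff)
    (hdeg : p.natDegree ≤ q.natDegree) :
    SPR p q ↔
      ∀ t ∈ Set.Icc (0 : ℝ) 1,
        Hurwitz (Polynomial.C t * p ^ 2 + Polynomial.C (1 - t) * q ^ 2) := by
  constructor
  · intro h t ht z hz
    by_contra! hre
    rw [aeval_C_mul_sq_add_C_mul_sq] at hz
    have hzero := (exists_mem_Icc_mul_sq_add_one_sub_mul_sq_eq_zero_iff
      (h.1.aeval_ne_zero hre)).1 ⟨t, ht, hz⟩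
    exact (h.re_pos_of_re_nonneg hdeg hre).ne' hzero
  · intro h
    have hq' : Hurwitz q := (h 0 (by simp)).of_dvd (by simp)
    have hp' : Hurwitz p := (h 1 (by simp)).of_dvd (by simp)
    refine SPR.of_re_ne_zero hp' hq' hp hq fun ω hω => ?_
    obtain ⟨t, ht, hroot⟩ := (exists_mem_Icc_mul_sq_add_one_sub_mul_sq_eq_zero_iff
      (hq'.aeval_ne_zero (by simp))).2 hω
    have := h t ht _ (by rwa [aeval_C_mul_sq_add_C_mul_sq])
    simp at this
end

section
/- Let Γ_u and Γ_v be real interval polynomial families of orders n_u and n_v with n_u ≤ n_v, such that the lower endpoints of the leading-coefficient intervals of Γ_u and Γ_v are positive. Then every member p_u/p_v (p_u ∈ Γ_u, p_v ∈ Γ_v) of the interval transfer function family is strictly positive real if and only if the eight vertex transfer functions K_1^u/K_4^v, K_2^u/K_3^v, K_3^u/K_1^v, K_4^u/K_2^v, K_1^u/K_3^v, K_2^u/K_4^v, K_3^u/K_2^v, K_4^u/K_1^v are strictly positive real. -/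
open Polynomial

/-- The real interval polynomial family with coefficient bounds `lo`, `hi`. -/
def intervalFamily (lo hi : ℕ → ℝ) : Set ℝ[X] :=
  {p | ∀ i, p.coeff i ∈ Set.Icc (lo i) (hi i)}

/-- Kharitonov-type vertex polynomial: the `i`-th coefficient is `hi i` when
`i % 4 ∈ hiRes`, and `lo i` otherwise. -/
noncomputable def kpoly (n : ℕ) (lo hi : ℕ → ℝ) (hiRes : Finset ℕ) : ℝ[X] :=
  ∑ i ∈ Finset.range (n + 1),
    Polynomial.C (if i % 4 ∈ hiRes then hi i else lo i) * Polynomial.X ^ i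

/-- The residue sets selecting the four Kharitonov polynomials `K₁, K₂, K₃, K₄`. -/
def kRes : Fin 4 → Finset ℕ := ![{2, 3}, {0, 1}, {0, 3}, {1, 2}]

/-- The `i`-th Kharitonov polynomial (`i : Fin 4` ↦ `K_{i+1}`). -/
noncomputable def kvert (n : ℕ) (lo hi : ℕ → ℝ) (i : Fin 4) : ℝ[X] :=
  kpoly n lo hi (kRes i)

/-!
Since `Re p(jω) = a₀ - a₂ω² + a₄ω⁴ - ⋯` and `Im p(jω) = a₁ω - a₃ω³ + ⋯`, for `ω ≥ 0` the values
`p(jω)`, `p ∈ Γ`, fill the axis-parallel rectangle with opposite corners `K₁(jω)` and `K₂(jω)`,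
whose other two corners are `K₃(jω)` and `K₄(jω)`. Now `Re (pᵤ/pᵥ) > 0` says `0 < ⟪pᵤ(jω), pᵥ(jω)⟫`,
and the form `a c + b d` on a product of two rectangles, being affine in each coordinate, is
positive as soon as it is positive at the 16 pairs of corners; an elementary case analysis gets
the 16 from the 8 vertex pairs of the statement. Negative `ω` follow by conjugation.

Hurwitz stability of `pᵥ` then comes from zero exclusion: `Γᵥ` is convex and none of its members
vanishes on the imaginary axis, so along the segment from the Hurwitz polynomial `K₁ᵛ` to `pᵥ`,
where degree and sign of the leading coefficient are constant, no root can cross into the closed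
right half-plane. The parameters of stable members and of unstable members form two disjoint
closed subsets of `[0, 1]`.
-/

open Complex Set ComplexConjugate AffineMap
open scoped InnerProductSpace

theorem Hurwitz.pow_re_mul_abs_le_norm_aeval {p : ℝ[X]} (hp : Hurwitz p) {z : ℂ}
    (hz : 0 ≤ z.re) : z.re ^ p.natDegree * |p.leadingCoeff| ≤ ‖aeval z p‖ := by
  set P := p.map (algebraMap ℝ ℂ)
  have hsplit : P.Splits := IsAlgClosed.splits P
  have hroot : ∀ r ∈ P.roots, z.re ≤ ‖z - r‖ := fun r hr => by
    have hr' : r.re < 0 := hp r (by simpa [P, aeval_def, eval_map] using (mem_roots'.1 hr).2)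
    calc z.re ≤ (z - r).re := by rw [sub_re]; linarith
      _ ≤ ‖z - r‖ := re_le_norm _
  have hprod : z.re ^ p.natDegree ≤ (P.roots.map (‖z - ·‖)).prod := by
    have := Multiset.prod_map_le_prod_map₀ (fun _ => z.re) (‖z - ·‖) (fun _ _ => hz) hroot
    simpa [P, ← hsplit.natDegree_eq_card_roots] using this
  have hnorm : ‖aeval z p‖ = |p.leadingCoeff| * (P.roots.map (‖z - ·‖)).prod := by
    rw [aeval_def, ← eval_map, hsplit.eval_eq_prod_roots, norm_mul]
    have := Multiset.prod_hom (P.roots.map (z - ·)) (normHom : ℂ →*₀ ℝ)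
    simp only [Multiset.map_map, Function.comp_def, normHom_apply] at this
    rw [← this]
    simp [P]
  rw [hnorm, mul_comm]
  gcongr

theorem norm_lt_cauchyBound_of_aeval_eq_zero {p : ℝ[X]} (hp : p ≠ 0) {z : ℂ}
    (hz : aeval z p = 0) : ‖z‖₊ < cauchyBound p := by
  have hroot : (p.map (algebraMap ℝ ℂ)).IsRoot z := by simpa [aeval_def, eval_map] using hz
  have h := hroot.norm_lt_cauchyBound (Polynomial.map_ne_zero hp)
  simpa [cauchyBound] using h

section Segment

variable {q₀ q₁ : ℝ[X]} {n : ℕ}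

theorem coeff_lineMap (t : ℝ) (i : ℕ) :
    (lineMap q₀ q₁ t : ℝ[X]).coeff i = (1 - t) * q₀.coeff i + t * q₁.coeff i := by
  simp [lineMap_apply_module]

theorem aeval_lineMap (z : ℂ) (t : ℝ) :
    aeval z (lineMap q₀ q₁ t : ℝ[X]) = (1 - t) • aeval z q₀ + t • aeval z q₁ := by
  simp [lineMap_apply_module]

theorem continuous_aeval_lineMap (q₀ q₁ : ℝ[X]) :
    Continuous fun x : ℝ × ℂ => aeval x.2 (lineMap q₀ q₁ x.1 : ℝ[X]) := by
  simp only [aeval_lineMap]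
  fun_prop

theorem natDegree_lineMap_le (hd₀ : q₀.natDegree ≤ n) (hd₁ : q₁.natDegree ≤ n) (t : ℝ) :
    (lineMap q₀ q₁ t : ℝ[X]).natDegree ≤ n := by
  rw [natDegree_le_iff_coeff_eq_zero]
  intro i hi
  simp [coeff_lineMap, coeff_eq_zero_of_natDegree_lt (hd₀.trans_lt hi),
    coeff_eq_zero_of_natDegree_lt (hd₁.trans_lt hi)]

theorem min_le_coeff_lineMap {t : ℝ} (ht : t ∈ Icc (0 : ℝ) 1) (i : ℕ) :
    min (q₀.coeff i) (q₁.coeff i) ≤ (lineMap q₀ q₁ t : ℝ[X]).coeff i := by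
  rw [coeff_lineMap]
  nlinarith [ht.1, ht.2, min_le_left (q₀.coeff i) (q₁.coeff i),
    min_le_right (q₀.coeff i) (q₁.coeff i)]

theorem coeff_lineMap_pos (hl₀ : 0 < q₀.coeff n) (hl₁ : 0 < q₁.coeff n) {t : ℝ}
    (ht : t ∈ Icc (0 : ℝ) 1) : 0 < (lineMap q₀ q₁ t : ℝ[X]).coeff n :=
  (lt_min hl₀ hl₁).trans_le (min_le_coeff_lineMap ht n)

theorem natDegree_lineMap_eq (hd₀ : q₀.natDegree ≤ n) (hd₁ : q₁.natDegree ≤ n)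
    (hl₀ : 0 < q₀.coeff n) (hl₁ : 0 < q₁.coeff n) {t : ℝ} (ht : t ∈ Icc (0 : ℝ) 1) :
    (lineMap q₀ q₁ t : ℝ[X]).natDegree = n :=
  (natDegree_lineMap_le hd₀ hd₁ t).antisymm <|
    le_natDegree_of_ne_zero (coeff_lineMap_pos hl₀ hl₁ ht).ne'

theorem exists_norm_le_of_aeval_lineMap_eq_zero (hd₀ : q₀.natDegree ≤ n)
    (hd₁ : q₁.natDegree ≤ n) (hl₀ : 0 < q₀.coeff n) (hl₁ : 0 < q₁.coeff n) :
    ∃ R : ℝ, ∀ t ∈ Icc (0 : ℝ) 1, ∀ z : ℂ, aeval z (lineMap q₀ q₁ t : ℝ[X]) = 0 → ‖z‖ ≤ R := by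
  refine ⟨(Finset.range n).sup (fun i => ‖q₀.coeff i‖₊ + ‖q₁.coeff i‖₊) /
    (min (q₀.coeff n) (q₁.coeff n)).toNNReal + 1, fun t ht z hz => ?_⟩
  have hdeg := natDegree_lineMap_eq hd₀ hd₁ hl₀ hl₁ ht
  have hlead := min_le_coeff_lineMap (q₀ := q₀) (q₁ := q₁) ht n
  have hne : (lineMap q₀ q₁ t : ℝ[X]) ≠ 0 := fun h => by
    simpa [h] using coeff_lineMap_pos hl₀ hl₁ ht
  rw [← coe_nnnorm, ← NNReal.coe_one, ← NNReal.coe_div, ← NNReal.coe_add, NNReal.coe_le_coe]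
  refine (norm_lt_cauchyBound_of_aeval_eq_zero hne hz).le.trans ?_
  rw [cauchyBound, hdeg, leadingCoeff, hdeg]
  gcongr with i
  · rw [← NNReal.coe_le_coe, NNReal.coe_add, coe_nnnorm, coe_nnnorm, coe_nnnorm,
      Real.norm_eq_abs, Real.norm_eq_abs, Real.norm_eq_abs, coeff_lineMap]
    refine abs_le.2 ⟨?_, ?_⟩ <;>
      nlinarith [ht.1, ht.2, abs_nonneg (q₀.coeff i), abs_nonneg (q₁.coeff i),
        neg_abs_le (q₀.coeff i), neg_abs_le (q₁.coeff i), le_abs_self (q₀.coeff i),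
        le_abs_self (q₁.coeff i)]
  · rw [Real.toNNReal_le_iff_le_coe, coe_nnnorm, Real.norm_eq_abs]
    exact hlead.trans (le_abs_self _)

theorem isClosed_setOf_hurwitz_lineMap (hd₀ : q₀.natDegree ≤ n) (hd₁ : q₁.natDegree ≤ n)
    (hl₀ : 0 < q₀.coeff n) (hl₁ : 0 < q₁.coeff n)
    (hax : ∀ t ∈ Icc (0 : ℝ) 1, ∀ ω : ℝ, aeval (ω * I) (lineMap q₀ q₁ t : ℝ[X]) ≠ 0) :
    IsClosed {t ∈ Icc (0 : ℝ) 1 | Hurwitz (lineMap q₀ q₁ t)} := by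
  -- Hurwitz stability of the members is the closed condition `Re z ^ n * lc ≤ ‖q z‖` on the
  -- right half-plane, because no member vanishes on its boundary.
  have hset : {t ∈ Icc (0 : ℝ) 1 | Hurwitz (lineMap q₀ q₁ t)} = Icc 0 1 ∩
      ⋂ z ∈ {z : ℂ | 0 ≤ z.re}, {t | z.re ^ n * (lineMap q₀ q₁ t : ℝ[X]).coeff n ≤
        ‖aeval z (lineMap q₀ q₁ t : ℝ[X])‖} := by
    ext t
    refine and_congr_right fun ht => ⟨fun hH => mem_iInter₂.2 fun z hz => ?_, fun h z hz => ?_⟩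
    · simpa [natDegree_lineMap_eq hd₀ hd₁ hl₀ hl₁ ht, leadingCoeff,
        abs_of_pos (coeff_lineMap_pos hl₀ hl₁ ht)] using hH.pow_re_mul_abs_le_norm_aeval hz
    · by_contra hre
      replace hre := not_lt.1 hre
      have hle : z.re ^ n * (lineMap q₀ q₁ t : ℝ[X]).coeff n ≤
          ‖aeval z (lineMap q₀ q₁ t : ℝ[X])‖ := mem_iInter₂.1 h z hre
      rw [hz, norm_zero] at hle
      rcases hre.lt_or_eq with hre | hre
      · exact (mul_pos (pow_pos hre n) (coeff_lineMap_pos hl₀ hl₁ ht)).not_ge hle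
      · refine hax t ht z.im ?_
        rwa [show (z.im : ℂ) * I = z from Complex.ext (by simp [← hre]) (by simp)]
  rw [hset]
  refine isClosed_Icc.inter (isClosed_biInter fun z _ => isClosed_le ?_ ?_)
  · simp only [coeff_lineMap]
    fun_prop
  · exact ((continuous_aeval_lineMap q₀ q₁).comp (Continuous.prodMk_left z)).norm

theorem isClosed_setOf_not_hurwitz_lineMap (hd₀ : q₀.natDegree ≤ n) (hd₁ : q₁.natDegree ≤ n)
    (hl₀ : 0 < q₀.coeff n) (hl₁ : 0 < q₁.coeff n) :
    IsClosed {t ∈ Icc (0 : ℝ) 1 | ¬Hurwitz (lineMap q₀ q₁ t)} := by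
  -- the roots are bounded uniformly in `t`, so this set is the projection of a compact set
  obtain ⟨R, hR⟩ := exists_norm_le_of_aeval_lineMap_eq_zero hd₀ hd₁ hl₀ hl₁
  set K := (Icc (0 : ℝ) 1 ×ˢ Metric.closedBall (0 : ℂ) R) ∩
    ({x : ℝ × ℂ | 0 ≤ x.2.re} ∩ {x | aeval x.2 (lineMap q₀ q₁ x.1 : ℝ[X]) = 0})
  have hK : IsCompact K := (isCompact_Icc.prod (isCompact_closedBall 0 R)).inter_right <|
    (isClosed_le continuous_const (continuous_re.comp continuous_snd)).inter
      (isClosed_eq (continuous_aeval_lineMap q₀ q₁) continuous_const)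
  have hset : {t ∈ Icc (0 : ℝ) 1 | ¬Hurwitz (lineMap q₀ q₁ t)} = Prod.fst '' K := by
    ext t
    simp only [Hurwitz, not_forall, not_lt, mem_image, Prod.exists, K,
      mem_inter_iff, mem_prod, Metric.mem_closedBall, dist_zero_right]
    constructor
    · rintro ⟨ht, z, hz, hre⟩
      exact ⟨t, z, ⟨⟨ht, hR t ht z hz⟩, hre, hz⟩, rfl⟩
    · rintro ⟨t, z, ⟨⟨ht, -⟩, hre, hz⟩, rfl⟩
      exact ⟨ht, z, hz, hre⟩
  rw [hset]
  exact (hK.image continuous_fst).isClosed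

theorem hurwitz_of_segment (hq₀ : Hurwitz q₀) (hd₀ : q₀.natDegree ≤ n)
    (hd₁ : q₁.natDegree ≤ n) (hl₀ : 0 < q₀.coeff n) (hl₁ : 0 < q₁.coeff n)
    (hax : ∀ q ∈ segment ℝ q₀ q₁, ∀ ω : ℝ, aeval (ω * I) q ≠ 0) : Hurwitz q₁ := by
  have hax' : ∀ t ∈ Icc (0 : ℝ) 1, ∀ ω : ℝ, aeval (ω * I) (lineMap q₀ q₁ t : ℝ[X]) ≠ 0 :=
    fun t ht => hax _ (segment_eq_image_lineMap ℝ q₀ q₁ ▸ mem_image_of_mem _ ht)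
  by_contra hq₁
  obtain ⟨t, -, hA, hB⟩ := isPreconnected_closed_iff.1 isPreconnected_Icc _ _
    (isClosed_setOf_hurwitz_lineMap hd₀ hd₁ hl₀ hl₁ hax')
    (isClosed_setOf_not_hurwitz_lineMap hd₀ hd₁ hl₀ hl₁)
    (fun t ht => (em _).imp (⟨ht, ·⟩) (⟨ht, ·⟩))
    ⟨0, left_mem_Icc.2 zero_le_one, left_mem_Icc.2 zero_le_one, by simpa using hq₀⟩
    ⟨1, right_mem_Icc.2 zero_le_one, right_mem_Icc.2 zero_le_one, by simpa using hq₁⟩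
  exact hB.2 hA.2

end Segment

theorem re_aeval_mul_I_le {f g : ℝ[X]} (ω : ℝ)
    (h₀ : ∀ i, i % 4 = 0 → f.coeff i ≤ g.coeff i) (h₂ : ∀ i, i % 4 = 2 → g.coeff i ≤ f.coeff i) :
    (aeval (ω * I) f).re ≤ (aeval (ω * I) g).re := by
  set N := max f.natDegree g.natDegree + 1
  rw [aeval_eq_sum_range' (n := N) (by omega), aeval_eq_sum_range' (n := N) (by omega), re_sum,
    re_sum]
  refine Finset.sum_le_sum fun i _ => ?_
  rw [smul_re, smul_re, mul_pow, I_pow_eq_pow_mod, ← ofReal_pow]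
  have : i % 4 < 4 := Nat.mod_lt _ (by norm_num)
  have hω : i % 2 = 0 → 0 ≤ ω ^ i := fun h => Even.pow_nonneg (Nat.even_iff.2 h) ω
  interval_cases h : i % 4
  · simpa [-ofReal_pow] using mul_le_mul_of_nonneg_right (h₀ i h) (hω (by omega))
  · simp [-ofReal_pow]
  · simpa [-ofReal_pow] using mul_le_mul_of_nonneg_right (h₂ i h) (hω (by omega))
  · simp [-ofReal_pow, pow_three]

theorem im_aeval_mul_I_le {f g : ℝ[X]} {ω : ℝ} (hω : 0 ≤ ω)
    (h₁ : ∀ i, i % 4 = 1 → f.coeff i ≤ g.coeff i) (h₃ : ∀ i, i % 4 = 3 → g.coeff i ≤ f.coeff i) :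
    (aeval (ω * I) f).im ≤ (aeval (ω * I) g).im := by
  set N := max f.natDegree g.natDegree + 1
  rw [aeval_eq_sum_range' (n := N) (by omega), aeval_eq_sum_range' (n := N) (by omega), im_sum,
    im_sum]
  refine Finset.sum_le_sum fun i _ => ?_
  rw [smul_im, smul_im, mul_pow, I_pow_eq_pow_mod, ← ofReal_pow]
  have : i % 4 < 4 := Nat.mod_lt _ (by norm_num)
  interval_cases h : i % 4
  · simp [-ofReal_pow]
  · simpa [-ofReal_pow] using mul_le_mul_of_nonneg_right (h₁ i h) (pow_nonneg hω i)
  · simp [-ofReal_pow]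
  · simpa [-ofReal_pow, pow_three] using mul_le_mul_of_nonneg_right (h₃ i h) (pow_nonneg hω i)

section IntervalFamily

variable {n : ℕ} {lo hi : ℕ → ℝ}

theorem convex_intervalFamily (lo hi : ℕ → ℝ) : Convex ℝ (intervalFamily lo hi) := by
  have : intervalFamily lo hi = ⋂ i, lcoeff ℝ i ⁻¹' Icc (lo i) (hi i) := by
    ext p
    simp [intervalFamily]
  rw [this]
  exact convex_iInter fun i => (convex_Icc _ _).linear_preimage (lcoeff ℝ i)

theorem natDegree_le_of_mem_intervalFamily (hb : ∀ i, n < i → lo i = 0 ∧ hi i = 0) {p : ℝ[X]}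
    (hp : p ∈ intervalFamily lo hi) : p.natDegree ≤ n := by
  refine natDegree_le_iff_coeff_eq_zero.2 fun i hi => ?_
  obtain ⟨h₁, h₂⟩ := hp i
  rw [(hb i hi).1] at h₁
  rw [(hb i hi).2] at h₂
  exact le_antisymm h₂ h₁

theorem coeff_kpoly (hb : ∀ i, n < i → lo i = 0 ∧ hi i = 0) (S : Finset ℕ) (i : ℕ) :
    (kpoly n lo hi S).coeff i = if i % 4 ∈ S then hi i else lo i := by
  simp only [kpoly, finsetSum_coeff, coeff_C_mul, coeff_X_pow, mul_ite, mul_one, mul_zero,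
    Finset.sum_ite_eq, Finset.mem_range, Nat.lt_succ_iff]
  rcases le_or_gt i n with h | h
  · rw [if_pos h]
  · simp [Nat.not_le.2 h, hb i h]

theorem kpoly_mem_intervalFamily (hle : ∀ i, lo i ≤ hi i)
    (hb : ∀ i, n < i → lo i = 0 ∧ hi i = 0) (S : Finset ℕ) :
    kpoly n lo hi S ∈ intervalFamily lo hi := fun i => by
  rw [coeff_kpoly hb]
  split_ifs
  exacts [⟨hle i, le_rfl⟩, ⟨le_rfl, hle i⟩]

theorem aeval_mem_reProdIm (hb : ∀ i, n < i → lo i = 0 ∧ hi i = 0) {ω : ℝ} (hω : 0 ≤ ω)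
    {p : ℝ[X]} (hp : p ∈ intervalFamily lo hi) :
    aeval (ω * I) p ∈ Icc (aeval (ω * I) (kvert n lo hi 0)).re (aeval (ω * I) (kvert n lo hi 1)).re
      ×ℂ Icc (aeval (ω * I) (kvert n lo hi 0)).im (aeval (ω * I) (kvert n lo hi 1)).im := by
  refine ⟨⟨?_, ?_⟩, ?_, ?_⟩
  all_goals first | apply re_aeval_mul_I_le | apply im_aeval_mul_I_le hω
  all_goals intro i h; simp [kvert, kRes, coeff_kpoly hb, h, (hp i).1, (hp i).2]

theorem aeval_kvert_two (hb : ∀ i, n < i → lo i = 0 ∧ hi i = 0) {ω : ℝ} (hω : 0 ≤ ω) :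
    aeval (ω * I) (kvert n lo hi 2) =
      ⟨(aeval (ω * I) (kvert n lo hi 1)).re, (aeval (ω * I) (kvert n lo hi 0)).im⟩ := by
  refine Complex.ext (le_antisymm ?_ ?_) (le_antisymm ?_ ?_)
  all_goals first | apply re_aeval_mul_I_le | apply im_aeval_mul_I_le hω
  all_goals intro i h; simp [kvert, kRes, coeff_kpoly hb, h]

theorem aeval_kvert_three (hb : ∀ i, n < i → lo i = 0 ∧ hi i = 0) {ω : ℝ} (hω : 0 ≤ ω) :
    aeval (ω * I) (kvert n lo hi 3) =
      ⟨(aeval (ω * I) (kvert n lo hi 0)).re, (aeval (ω * I) (kvert n lo hi 1)).im⟩ := by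
  refine Complex.ext (le_antisymm ?_ ?_) (le_antisymm ?_ ?_)
  all_goals first | apply re_aeval_mul_I_le | apply im_aeval_mul_I_le hω
  all_goals intro i h; simp [kvert, kRes, coeff_kpoly hb, h]

end IntervalFamily

/-- Positivity of `a * c + b * d` at those vertices of the box
`[a₁, a₂] × [b₁, b₂] × [c₁, c₂] × [d₁, d₂]` that have an odd number of upper endpoints. -/
def OddVerticesPos (a₁ a₂ b₁ b₂ c₁ c₂ d₁ d₂ : ℝ) : Prop :=
  0 < a₁ * c₁ + b₁ * d₂ ∧ 0 < a₁ * c₂ + b₁ * d₁ ∧ 0 < a₁ * c₁ + b₂ * d₁ ∧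
    0 < a₁ * c₂ + b₂ * d₂ ∧ 0 < a₂ * c₁ + b₁ * d₁ ∧ 0 < a₂ * c₂ + b₁ * d₂ ∧
    0 < a₂ * c₁ + b₂ * d₂ ∧ 0 < a₂ * c₂ + b₂ * d₁

theorem exists_mem_pair_mul_le {t₁ t₂ t : ℝ} (ht : t ∈ Icc t₁ t₂) (s : ℝ) :
    ∃ t' ∈ ({t₁, t₂} : Set ℝ), t' * s ≤ t * s := by
  rcases le_total 0 s with hs | hs
  · exact ⟨t₁, .inl rfl, mul_le_mul_of_nonneg_right ht.1 hs⟩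
  · exact ⟨t₂, .inr rfl, mul_le_mul_of_nonpos_right ht.2 hs⟩

namespace OddVerticesPos

variable {a₁ a₂ b₁ b₂ c₁ c₂ d₁ d₂ : ℝ}

theorem neg_ac (h : OddVerticesPos a₁ a₂ b₁ b₂ c₁ c₂ d₁ d₂) :
    OddVerticesPos (-a₂) (-a₁) b₁ b₂ (-c₂) (-c₁) d₁ d₂ := by
  obtain ⟨h₁, h₂, h₃, h₄, h₅, h₆, h₇, h₈⟩ := h
  refine ⟨?_, ?_, ?_, ?_, ?_, ?_, ?_, ?_⟩ <;> linarith

theorem neg_bd (h : OddVerticesPos a₁ a₂ b₁ b₂ c₁ c₂ d₁ d₂) :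
    OddVerticesPos a₁ a₂ (-b₂) (-b₁) c₁ c₂ (-d₂) (-d₁) := by
  obtain ⟨h₁, h₂, h₃, h₄, h₅, h₆, h₇, h₈⟩ := h
  refine ⟨?_, ?_, ?_, ?_, ?_, ?_, ?_, ?_⟩ <;> linarith

theorem swap (h : OddVerticesPos a₁ a₂ b₁ b₂ c₁ c₂ d₁ d₂) :
    OddVerticesPos b₁ b₂ a₁ a₂ d₁ d₂ c₁ c₂ := by
  obtain ⟨h₁, h₂, h₃, h₄, h₅, h₆, h₇, h₈⟩ := h
  refine ⟨?_, ?_, ?_, ?_, ?_, ?_, ?_, ?_⟩ <;> linarith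

theorem lower_pos (h : OddVerticesPos a₁ a₂ b₁ b₂ c₁ c₂ d₁ d₂) (ha : a₁ ≤ a₂) (hb : b₁ ≤ b₂)
    (hc : c₁ ≤ c₂) (hd : d₁ ≤ d₂) : 0 < a₁ * c₁ + b₁ * d₁ := by
  obtain ⟨h₁, h₂, h₃, h₄, h₅, h₆, h₇, h₈⟩ := h
  -- if one of `a₁, b₁, c₁, d₁` is `≤ 0`, raising its partner reaches an odd vertex, no larger form
  rcases le_or_gt b₁ 0 with hs | hs
  · nlinarith
  rcases le_or_gt d₁ 0 with ht | ht
  · nlinarith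
  rcases le_or_gt c₁ 0 with hu | hu
  · nlinarith
  rcases le_or_gt a₁ 0 with hv | hv
  · nlinarith
  positivity

theorem mixed_pos (h : OddVerticesPos a₁ a₂ b₁ b₂ c₁ c₂ d₁ d₂) (ha : a₁ ≤ a₂) (hb : b₁ ≤ b₂)
    (hc : c₁ ≤ c₂) (hd : d₁ ≤ d₂) : 0 < a₂ * c₁ + b₁ * d₂ := by
  obtain ⟨h₁, h₂, h₃, h₄, h₅, h₆, h₇, h₈⟩ := h
  rcases le_or_gt 0 c₁ with hc₁ | hc₁
  · nlinarith
  rcases le_or_gt a₂ 0 with ha₂ | ha₂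
  · nlinarith
  rcases le_or_gt d₂ 0 with hd₂ | hd₂
  · nlinarith
  rcases le_or_gt 0 b₁ with hb₁ | hb₁
  · nlinarith
  exfalso
  have ha₁ : a₁ < 0 := by nlinarith
  have hd₁ : d₁ < 0 := by nlinarith
  have hc₂ : 0 < c₂ := by nlinarith
  have hb₂ : 0 < b₂ := by nlinarith
  -- multiplying `h₁` by `h₂` and `h₇` by `h₈` gives `c₂ d₂ < c₁ d₁` and `c₁ d₁ < c₂ d₂`
  have e₁ : a₁ * b₁ * (c₂ * d₂) < a₁ * b₁ * (c₁ * d₁) := by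
    have := mul_lt_mul'' (show -b₁ * d₂ < a₁ * c₁ by linarith)
      (show -a₁ * c₂ < b₁ * d₁ by linarith) (by nlinarith) (by nlinarith)
    linarith
  have e₂ : a₂ * b₂ * (c₁ * d₁) < a₂ * b₂ * (c₂ * d₂) := by
    have := mul_lt_mul'' (show a₂ * -c₁ < b₂ * d₂ by linarith)
      (show b₂ * -d₁ < a₂ * c₂ by linarith) (by nlinarith) (by nlinarith)
    linarith
  linarith [lt_of_mul_lt_mul_left e₁ (mul_pos_of_neg_of_neg ha₁ hb₁).le,
    lt_of_mul_lt_mul_left e₂ (mul_pos ha₂ hb₂).le]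

theorem vertex_pos (h : OddVerticesPos a₁ a₂ b₁ b₂ c₁ c₂ d₁ d₂) (ha : a₁ ≤ a₂) (hb : b₁ ≤ b₂)
    (hc : c₁ ≤ c₂) (hd : d₁ ≤ d₂) :
    ∀ a ∈ ({a₁, a₂} : Set ℝ), ∀ b ∈ ({b₁, b₂} : Set ℝ), ∀ c ∈ ({c₁, c₂} : Set ℝ),
      ∀ d ∈ ({d₁, d₂} : Set ℝ), 0 < a * c + b * d := by
  have ha' := neg_le_neg ha
  have hb' := neg_le_neg hb
  have hc' := neg_le_neg hc
  have hd' := neg_le_neg hd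
  have e₁ := h.lower_pos ha hb hc hd
  have e₂ := h.neg_bd.lower_pos ha hb' hc hd'
  have e₃ := h.neg_ac.lower_pos ha' hb hc' hd
  have e₄ := h.neg_ac.neg_bd.lower_pos ha' hb' hc' hd'
  have e₅ := h.mixed_pos ha hb hc hd
  have e₆ := h.swap.mixed_pos hb ha hd hc
  have e₇ := h.neg_ac.mixed_pos ha' hb hc' hd
  have e₈ := h.neg_ac.swap.mixed_pos hb ha' hd hc'
  obtain ⟨h₁, h₂, h₃, h₄, h₅, h₆, h₇, h₈⟩ := h
  rintro a (rfl | rfl) b (rfl | rfl) c (rfl | rfl) d (rfl | rfl) <;> linarith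

theorem pos (h : OddVerticesPos a₁ a₂ b₁ b₂ c₁ c₂ d₁ d₂) {a b c d : ℝ} (ha : a ∈ Icc a₁ a₂)
    (hb : b ∈ Icc b₁ b₂) (hc : c ∈ Icc c₁ c₂) (hd : d ∈ Icc d₁ d₂) : 0 < a * c + b * d := by
  obtain ⟨a', ha', hac⟩ := exists_mem_pair_mul_le ha c
  obtain ⟨b', hb', hbd⟩ := exists_mem_pair_mul_le hb d
  obtain ⟨c', hc', hca⟩ := exists_mem_pair_mul_le hc a'
  obtain ⟨d', hd', hdb⟩ := exists_mem_pair_mul_le hd b'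
  have := h.vertex_pos (nonempty_Icc.1 ⟨a, ha⟩) (nonempty_Icc.1 ⟨b, hb⟩)
    (nonempty_Icc.1 ⟨c, hc⟩) (nonempty_Icc.1 ⟨d, hd⟩) a' ha' b' hb' c' hc' d' hd'
  linarith

end OddVerticesPos

theorem real_inner_eq_re_mul_re_add_im_mul_im (z w : ℂ) :
    ⟪z, w⟫_ℝ = z.re * w.re + z.im * w.im := by
  rw [Complex.inner, mul_re, conj_re, conj_im]
  ring

theorem re_div_pos_iff_real_inner_pos (z w : ℂ) : 0 < (z / w).re ↔ 0 < ⟪z, w⟫_ℝ := by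
  rcases eq_or_ne w 0 with rfl | hw
  · simp
  rw [div_re, ← add_div, div_pos_iff_of_pos_right (normSq_pos.2 hw),
    real_inner_eq_re_mul_re_add_im_mul_im]

theorem OddVerticesPos.real_inner_pos {z₁ z₂ w₁ w₂ : ℂ}
    (h : OddVerticesPos z₁.re z₂.re z₁.im z₂.im w₁.re w₂.re w₁.im w₂.im) {z w : ℂ}
    (hz : z ∈ Icc z₁.re z₂.re ×ℂ Icc z₁.im z₂.im) (hw : w ∈ Icc w₁.re w₂.re ×ℂ Icc w₁.im w₂.im) :
    0 < ⟪z, w⟫_ℝ := by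
  rw [real_inner_eq_re_mul_re_add_im_mul_im]
  exact h.pos hz.1 hz.2 hw.1 hw.2

theorem real_inner_aeval_neg_mul_I (p q : ℝ[X]) (ω : ℝ) :
    ⟪aeval (↑(-ω) * I) p, aeval (↑(-ω) * I) q⟫_ℝ = ⟪aeval (ω * I) p, aeval (ω * I) q⟫_ℝ := by
  have h : ((-ω : ℝ) : ℂ) * I = conj (ω * I) := by simp
  simp only [h, aeval_conj, real_inner_eq_re_mul_re_add_im_mul_im, conj_re, conj_im]
  ring

theorem real_inner_aeval_pos_of_vertices {nu nv : ℕ} {lou hiu lov hiv : ℕ → ℝ}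
    (hbu : ∀ i, nu < i → lou i = 0 ∧ hiu i = 0) (hbv : ∀ i, nv < i → lov i = 0 ∧ hiv i = 0)
    -- `i / 2 ≠ j / 2` selects the eight pairs `Kᵢ₊₁ᵘ / Kⱼ₊₁ᵛ` that match one of `K₁, K₂` with
    -- one of `K₃, K₄`
    (hK : ∀ i j : Fin 4, (i : ℕ) / 2 ≠ j / 2 → SPR (kvert nu lou hiu i) (kvert nv lov hiv j))
    (ω : ℝ) {pu pv : ℝ[X]} (hpu : pu ∈ intervalFamily lou hiu) (hpv : pv ∈ intervalFamily lov hiv) :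
    0 < ⟪aeval (ω * I) pu, aeval (ω * I) pv⟫_ℝ := by
  wlog hω : 0 ≤ ω generalizing ω
  · rw [← real_inner_aeval_neg_mul_I]
    exact this (-ω) (by linarith)
  have hv : ∀ i j : Fin 4, (i : ℕ) / 2 ≠ j / 2 →
      0 < ⟪aeval (ω * I) (kvert nu lou hiu i), aeval (ω * I) (kvert nv lov hiv j)⟫_ℝ :=
    fun i j hij => (re_div_pos_iff_real_inner_pos _ _).1 ((hK i j hij).2 ω)
  refine OddVerticesPos.real_inner_pos ?_ (aeval_mem_reProdIm hbu hω hpu)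
    (aeval_mem_reProdIm hbv hω hpv)
  have h₁ := hv 0 3 (by decide)
  have h₂ := hv 0 2 (by decide)
  have h₃ := hv 3 0 (by decide)
  have h₄ := hv 3 1 (by decide)
  have h₅ := hv 2 0 (by decide)
  have h₆ := hv 2 1 (by decide)
  have h₇ := hv 1 3 (by decide)
  have h₈ := hv 1 2 (by decide)
  simp only [aeval_kvert_two hbu hω, aeval_kvert_three hbu hω,
    aeval_kvert_two hbv hω, aeval_kvert_three hbv hω,
    real_inner_eq_re_mul_re_add_im_mul_im] at h₁ h₂ h₃ h₄ h₅ h₆ h₇ h₈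
  exact ⟨h₁, h₂, h₃, h₄, h₅, h₆, h₇, h₈⟩

theorem interval_spr_eight_vertices_general (nu nv : ℕ) (lou hiu lov hiv : ℕ → ℝ)
    (hleu : ∀ i, lou i ≤ hiu i) (hlev : ∀ i, lov i ≤ hiv i)
    (hbu : ∀ i, nu < i → lou i = 0 ∧ hiu i = 0)
    (hbv : ∀ i, nv < i → lov i = 0 ∧ hiv i = 0)
    (hleadv : 0 < lov nv) :
    (∀ pu ∈ intervalFamily lou hiu, ∀ pv ∈ intervalFamily lov hiv, SPR pu pv) ↔
      (SPR (kvert nu lou hiu 0) (kvert nv lov hiv 3) ∧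
       SPR (kvert nu lou hiu 1) (kvert nv lov hiv 2) ∧
       SPR (kvert nu lou hiu 2) (kvert nv lov hiv 0) ∧
       SPR (kvert nu lou hiu 3) (kvert nv lov hiv 1) ∧
       SPR (kvert nu lou hiu 0) (kvert nv lov hiv 2) ∧
       SPR (kvert nu lou hiu 1) (kvert nv lov hiv 3) ∧
       SPR (kvert nu lou hiu 2) (kvert nv lov hiv 1) ∧
       SPR (kvert nu lou hiu 3) (kvert nv lov hiv 0)) := by
  have hKu := kpoly_mem_intervalFamily hleu hbu
  have hKv := kpoly_mem_intervalFamily hlev hbv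
  constructor
  · intro h
    refine ⟨?_, ?_, ?_, ?_, ?_, ?_, ?_, ?_⟩ <;> exact h _ (hKu _) _ (hKv _)
  rintro ⟨h₁₄, h₂₃, h₃₁, h₄₂, h₁₃, h₂₄, h₃₂, h₄₁⟩ pu hpu pv hpv
  have hK : ∀ i j : Fin 4, (i : ℕ) / 2 ≠ j / 2 →
      SPR (kvert nu lou hiu i) (kvert nv lov hiv j) := by
    intro i j hij
    fin_cases i <;> fin_cases j <;> simp at hij ⊢ <;> assumption
  have hpos := real_inner_aeval_pos_of_vertices hbu hbv hK
  have hax : ∀ q ∈ segment ℝ (kvert nv lov hiv 0) pv, ∀ ω : ℝ, aeval (ω * I) q ≠ 0 :=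
    fun q hq ω h0 => by
      simpa [h0] using hpos ω (hKu (kRes 0))
        ((convex_intervalFamily lov hiv).segment_subset (hKv _) hpv hq)
  refine ⟨hurwitz_of_segment h₃₁.1 (natDegree_le_of_mem_intervalFamily hbv (hKv _))
    (natDegree_le_of_mem_intervalFamily hbv hpv) (hleadv.trans_le (hKv _ nv).1)
    (hleadv.trans_le (hpv nv).1) hax,
    fun ω => (re_div_pos_iff_real_inner_pos _ _).2 (hpos ω hpu hpv)⟩

/-- Every member of the interval transfer function family `Γ_u / Γ_v` is strictly positive
real iff the eight vertex transfer functions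
`K₁ᵘ/K₄ᵛ, K₂ᵘ/K₃ᵛ, K₃ᵘ/K₁ᵛ, K₄ᵘ/K₂ᵛ, K₁ᵘ/K₃ᵛ, K₂ᵘ/K₄ᵛ, K₃ᵘ/K₂ᵛ, K₄ᵘ/K₁ᵛ` are. -/
theorem interval_spr_eight_vertices (nu nv : ℕ) (lou hiu lov hiv : ℕ → ℝ)
    (hleu : ∀ i, lou i ≤ hiu i) (hlev : ∀ i, lov i ≤ hiv i)
    (hbu : ∀ i, nu < i → lou i = 0 ∧ hiu i = 0)
    (hbv : ∀ i, nv < i → lov i = 0 ∧ hiv i = 0)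
    (hnn : nu ≤ nv)
    (hleadu : 0 < lou nu) (hleadv : 0 < lov nv) :
    (∀ pu ∈ intervalFamily lou hiu, ∀ pv ∈ intervalFamily lov hiv, SPR pu pv) ↔
      (SPR (kvert nu lou hiu 0) (kvert nv lov hiv 3) ∧
       SPR (kvert nu lou hiu 1) (kvert nv lov hiv 2) ∧
       SPR (kvert nu lou hiu 2) (kvert nv lov hiv 0) ∧
       SPR (kvert nu lou hiu 3) (kvert nv lov hiv 1) ∧
       SPR (kvert nu lou hiu 0) (kvert nv lov hiv 2) ∧
       SPR (kvert nu lou hiu 1) (kvert nv lov hiv 3) ∧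
       SPR (kvert nu lou hiu 2) (kvert nv lov hiv 1) ∧
       SPR (kvert nu lou hiu 3) (kvert nv lov hiv 0)) :=
  interval_spr_eight_vertices_general nu nv lou hiu lov hiv hleu hlev hbu hbv hleadv
end

section
/- Let g and f be real polynomials with deg g < deg f and with f + g Hurwitz stable. Then the sensitivity function S = f/(f+g) satisfies ‖S‖_∞ = sup_{ω∈ℝ} |f(jω)/(f(jω)+g(jω))| ≥ 1. -/
/-!
Because `deg g < deg f`, the polynomial `f + g` is asymptotically equivalent to `f` at infinity,
so `S(jω) → 1` as `|ω| → ∞`. Hurwitz stability of `f + g` keeps the denominator of `S` away from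
zero on the imaginary axis, so `|S(jω)|` is continuous with a limit at infinity, hence bounded
(without which the real supremum would be the junk value `0`), and its supremum is at least `1`.
-/

open Polynomial

/-- The H∞ norm of the sensitivity function `S = f/(f+g)`:
`‖S‖_∞ = sup_{ω ∈ ℝ} |f(jω)/(f(jω)+g(jω))|`. -/
noncomputable def sensNorm (f g : ℝ[X]) : ℝ :=
  ⨆ ω : ℝ, ‖
    (Polynomial.aeval ((ω : ℂ) * Complex.I) f /
      (Polynomial.aeval ((ω : ℂ) * Complex.I) f + Polynomial.aeval ((ω : ℂ) * Complex.I) g))‖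

open Filter Topology Bornology Asymptotics Complex

theorem isBounded_range_of_tendsto_cocompact {X Y : Type*} [TopologicalSpace X]
    [PseudoMetricSpace Y] {f : X → Y} {y : Y} (hf : Continuous f)
    (hlim : Tendsto f (cocompact X) (𝓝 y)) : IsBounded (Set.range f) := by
  obtain ⟨s, hs, hbdd⟩ := Metric.exists_isBounded_image_of_tendsto hlim
  obtain ⟨K, hK, hKs⟩ := mem_cocompact.mp hs
  refine ((hK.image hf).isBounded.union hbdd).subset ?_
  rintro _ ⟨x, rfl⟩
  by_cases hx : x ∈ K
  · exact Or.inl ⟨x, hx, rfl⟩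
  · exact Or.inr ⟨x, hKs hx, rfl⟩

theorem isEquivalent_cobounded_aeval_add_of_degree_lt {R A : Type*} [Field R] [NormedField A]
    [Algebra R A] {f g : R[X]} (h : g.degree < f.degree) :
    (fun z : A => aeval z (f + g)) ~[cobounded A] fun z => aeval z f := by
  have hmap : (g.map (algebraMap R A)).degree < (f.map (algebraMap R A)).degree := by
    rwa [degree_map, degree_map]
  have := (isLittleO_cobounded_of_degree_lt hmap).add_isEquivalent IsEquivalent.refl
  simpa [Pi.add_def, eval_map_algebraMap, add_comm] using this

theorem tendsto_ofReal_mul_I_cobounded :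
    Tendsto (fun ω : ℝ => (ω : ℂ) * I) (cobounded ℝ) (cobounded ℂ) := by
  rw [← tendsto_norm_atTop_iff_cobounded]
  simpa only [norm_mul, norm_real, norm_I, mul_one] using tendsto_norm_cobounded_atTop

theorem Hurwitz.aeval_ofReal_mul_I_ne_zero {p : ℝ[X]} (hp : Hurwitz p) (ω : ℝ) :
    aeval ((ω : ℂ) * I) p ≠ 0 := fun h => by
  simpa using hp _ h

noncomputable def sensitivity (f g : ℝ[X]) (ω : ℝ) : ℂ :=
  aeval ((ω : ℂ) * I) f / (aeval ((ω : ℂ) * I) f + aeval ((ω : ℂ) * I) g)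

theorem sensNorm_eq_iSup_norm_sensitivity (f g : ℝ[X]) :
    sensNorm f g = ⨆ ω, ‖sensitivity f g ω‖ := rfl

theorem continuous_sensitivity {f g : ℝ[X]} (hH : Hurwitz (f + g)) :
    Continuous (sensitivity f g) := by
  have hpath : Continuous fun ω : ℝ => (ω : ℂ) * I := by fun_prop
  refine ((Polynomial.continuous_aeval f).comp hpath).div
    (((Polynomial.continuous_aeval f).comp hpath).add
      ((Polynomial.continuous_aeval g).comp hpath)) fun ω => ?_
  simpa using hH.aeval_ofReal_mul_I_ne_zero ω

theorem tendsto_sensitivity_cobounded {f g : ℝ[X]} (hH : Hurwitz (f + g))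
    (hdeg : g.degree < f.degree) : Tendsto (sensitivity f g) (cobounded ℝ) (𝓝 1) := by
  have hequiv := (isEquivalent_cobounded_aeval_add_of_degree_lt hdeg).symm.comp_tendsto
    tendsto_ofReal_mul_I_cobounded
  have := (isEquivalent_iff_tendsto_one
    (Eventually.of_forall hH.aeval_ofReal_mul_I_ne_zero)).mp hequiv
  exact this.congr fun ω => by simp [sensitivity]

/-- For real polynomials `g`, `f` with `deg g < deg f` and `f + g` Hurwitz stable, the
sensitivity function `S = f/(f+g)` satisfies `‖S‖_∞ ≥ 1`. -/
theorem sensitivity_norm_ge_one (g f : ℝ[X])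
    (hdeg : g.natDegree < f.natDegree) (hH : Hurwitz (f + g)) :
    1 ≤ sensNorm f g := by
  have hlim : Tendsto (fun ω => ‖sensitivity f g ω‖) (cobounded ℝ) (𝓝 1) := by
    simpa using (tendsto_sensitivity_cobounded hH (degree_lt_degree hdeg)).norm
  have hbdd : BddAbove (Set.range fun ω => ‖sensitivity f g ω‖) :=
    (isBounded_range_of_tendsto_cocompact (continuous_sensitivity hH).norm
      (Metric.cobounded_eq_cocompact (α := ℝ) ▸ hlim)).bddAbove
  rw [sensNorm_eq_iSup_norm_sensitivity]
  exact le_of_tendsto' hlim fun ω => le_ciSup hbdd ω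
end
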